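/- There exist injective point configurations x, y : Fin 6 → EuclideanSpace ℝ (Fin 3) and a single multiset M of real numbers such that: (1) for every i ∈ Fin 6, the multiset {dist (x i) (x j) : j ∈ Fin 6} equals M, and for every i ∈ Fin 6, the multiset {dist (y i) (y j) : j ∈ Fin 6} equals M (every node of both configurations has the same unordered distance list); yet (2) x and y are not congruent, i.e., there is no permutation σ of Fin 6 with dist (x i) (x j) = dist (y (σ i)) (y (σ j)) for all i, j. (Such a pair can be obtained by taking two suitable 6-vertex subsets of a regular icosahedron.) -/

import Mathlib

/-!
Take the regular icosahedron whose vertices are the cyclic permutations of `(0, ±1, ±φ)`: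
distinct vertices are at squared distance `4`, `4φ + 4` or `4φ + 8`. In both six-vertex
subsets `x` (a face and its antipodal face) and `y` below, every node sees the other five at
squared distances `4, 4, 4φ + 4, 4φ + 4, 4φ + 8`. A distance-preserving bijection would carry
the pairs of `x` at distance `2` onto those of `y`, but the former contain the triangle
`{0, 1, 2}` while the latter form a hexagon.
-/

open Real goldenRatio

section DistPattern

variable {ι α P : Type*} [PseudoMetricSpace P]

def HasDistPattern (x : ι → P) (ℓ : α → ℝ) (D : ι → ι → α) : Prop :=
  ∀ i j, dist (x i) (x j) = ℓ (D i j)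

namespace HasDistPattern

variable {x : ι → P} {ℓ : α → ℝ} {D : ι → ι → α}

theorem map_dist_eq [Fintype ι] (h : HasDistPattern x ℓ D) (i : ι) :
    Multiset.map (fun j => dist (x i) (x j)) (Finset.univ : Finset ι).val =
      ((Finset.univ : Finset ι).val.map (D i)).map ℓ := by
  rw [Multiset.map_map]
  exact Multiset.map_congr rfl fun j _ => h i j

theorem injective (h : HasDistPattern x ℓ D) (hℓ : ℓ.Injective)
    (hD : ∀ i j, D i j = D i i → i = j) : x.Injective := fun i j hij =>
  hD i j <| hℓ <| by rw [← h, ← h, hij]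

theorem apply_eq_of_dist_eq {Q : Type*} [PseudoMetricSpace Q] {y : ι → Q} {E : ι → ι → α}
    (hx : HasDistPattern x ℓ D) (hy : HasDistPattern y ℓ E) (hℓ : ℓ.Injective)
    {σ : ι → ι} (hσ : ∀ i j, dist (x i) (x j) = dist (y (σ i)) (y (σ j))) (i j : ι) :
    D i j = E (σ i) (σ j) :=
  hℓ <| by rw [← hx, ← hy, hσ]

end HasDistPattern

end DistPattern

noncomputable section

namespace Icosahedron

-- Labels `0, 1, 2, 3`: a vertex itself, an edge, a diagonal of a vertex figure, the antipode.
def sqDist : Fin 4 → ℝ := ![0, 4, 4 * φ + 4, 4 * φ + 8]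

def distOfLabel (k : Fin 4) : ℝ := √(sqDist k)

theorem sqDist_injective : sqDist.Injective := by
  have hφ := one_lt_goldenRatio
  intro k l hkl
  fin_cases k <;> fin_cases l <;>
    simp only [sqDist, Fin.zero_eta, Fin.mk_one, Fin.reduceFinMk, Matrix.cons_val] at hkl ⊢ <;>
    first | rfl | linarith

theorem distOfLabel_injective : distOfLabel.Injective := by
  have hφ := one_lt_goldenRatio
  have hsq : ∀ k, 0 ≤ sqDist k := by
    intro k
    fin_cases k <;>
      simp only [sqDist, Fin.zero_eta, Fin.mk_one, Fin.reduceFinMk, Matrix.cons_val] <;> linarith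
  intro k l hkl
  rwa [distOfLabel, distOfLabel, Real.sqrt_inj (hsq k) (hsq l), sqDist_injective.eq_iff]
    at hkl

def x : Fin 6 → EuclideanSpace ℝ (Fin 3) :=
  ![!₂[0, 1, φ], !₂[1, φ, 0], !₂[φ, 0, 1],
    !₂[0, -1, -φ], !₂[-1, -φ, 0], !₂[-φ, 0, -1]]

def y : Fin 6 → EuclideanSpace ℝ (Fin 3) :=
  ![!₂[0, 1, φ], !₂[1, φ, 0], !₂[0, 1, -φ],
    !₂[0, -1, φ], !₂[0, -1, -φ], !₂[-1, -φ, 0]]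

def patternX : Fin 6 → Fin 6 → Fin 4 :=
  ![![0, 1, 1, 3, 2, 2], ![1, 0, 1, 2, 3, 2], ![1, 1, 0, 2, 2, 3],
    ![3, 2, 2, 0, 1, 1], ![2, 3, 2, 1, 0, 1], ![2, 2, 3, 1, 1, 0]]

def patternY : Fin 6 → Fin 6 → Fin 4 :=
  ![![0, 1, 2, 1, 3, 2], ![1, 0, 1, 2, 2, 3], ![2, 1, 0, 3, 1, 2],
    ![1, 2, 3, 0, 2, 1], ![3, 2, 1, 2, 0, 1], ![2, 3, 2, 1, 1, 0]]

theorem hasDistPattern_x : HasDistPattern x distOfLabel patternX := by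
  intro i j
  rw [distOfLabel, EuclideanSpace.dist_eq]
  congr 1
  fin_cases i <;> fin_cases j <;>
    simp only [x, patternX, sqDist, Fin.sum_univ_three, Real.dist_eq, sq_abs, Fin.isValue,
      Fin.zero_eta, Fin.mk_one, Fin.reduceFinMk, Matrix.cons_val, Matrix.cons_val_zero,
      Matrix.cons_val_one] <;>
    grind [goldenRatio_sq]

theorem hasDistPattern_y : HasDistPattern y distOfLabel patternY := by
  intro i j
  rw [distOfLabel, EuclideanSpace.dist_eq]
  congr 1
  fin_cases i <;> fin_cases j <;>
    simp only [y, patternY, sqDist, Fin.sum_univ_three, Real.dist_eq, sq_abs, Fin.isValue,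
      Fin.zero_eta, Fin.mk_one, Fin.reduceFinMk, Matrix.cons_val, Matrix.cons_val_zero,
      Matrix.cons_val_one] <;>
    grind [goldenRatio_sq]

theorem eq_of_patternX_eq_diag : ∀ i j, patternX i j = patternX i i → i = j := by decide

theorem eq_of_patternY_eq_diag : ∀ i j, patternY i j = patternY i i → i = j := by decide

theorem map_patternX :
    ∀ i, (Finset.univ : Finset (Fin 6)).val.map (patternX i) = {0, 1, 1, 2, 2, 3} := by
  decide

theorem map_patternY :
    ∀ i, (Finset.univ : Finset (Fin 6)).val.map (patternY i) = {0, 1, 1, 2, 2, 3} := by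
  decide

theorem patternY_edge_triangle_free :
    ∀ a b c, ¬ (patternY a b = 1 ∧ patternY a c = 1 ∧ patternY b c = 1) := by
  decide

end Icosahedron

end

open Icosahedron in
theorem exists_noncongruent_six_point_configs_with_same_distance_lists :
    ∃ (x y : Fin 6 → EuclideanSpace ℝ (Fin 3)) (M : Multiset ℝ),
      Function.Injective x ∧ Function.Injective y ∧
      (∀ i : Fin 6,
        Multiset.map (fun j => dist (x i) (x j)) (Finset.univ : Finset (Fin 6)).val = M) ∧
      (∀ i : Fin 6,
        Multiset.map (fun j => dist (y i) (y j)) (Finset.univ : Finset (Fin 6)).val = M) ∧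
      ¬ ∃ σ : Equiv.Perm (Fin 6),
          ∀ i j, dist (x i) (x j) = dist (y (σ i)) (y (σ j)) := by
  refine ⟨x, y, ({0, 1, 1, 2, 2, 3} : Multiset (Fin 4)).map distOfLabel,
    hasDistPattern_x.injective distOfLabel_injective eq_of_patternX_eq_diag,
    hasDistPattern_y.injective distOfLabel_injective eq_of_patternY_eq_diag,
    fun i => by rw [hasDistPattern_x.map_dist_eq, map_patternX],
    fun i => by rw [hasDistPattern_y.map_dist_eq, map_patternY], ?_⟩
  rintro ⟨σ, hσ⟩
  have h := hasDistPattern_x.apply_eq_of_dist_eq hasDistPattern_y distOfLabel_injective hσ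
  exact patternY_edge_triangle_free (σ 0) (σ 1) (σ 2)
    ⟨(h 0 1).symm, (h 0 2).symm, (h 1 2).symm⟩
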